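/- Let K be ℝ or ℂ, d ≥ 1, and fix a norm ‖·‖ on K^d. Let 𝒜 be an irreducible compact set of d×d matrices over K, let ‖·‖_𝒜 be any Barabanov norm for 𝒜, let C = ecc(‖·‖_𝒜, ‖·‖), and let ℬ be any nonempty bounded set of d×d matrices over K. Then ρ(ℬ) ≤ ρ(𝒜) + C·H(𝒜,ℬ). -/

import Mathlib

open Filter Set

namespace JSRPaper

section Defs

variable {d : ℕ} {K : Type*} [RCLike K]

/-- `N` is a norm on `Fin d → K` (`K` is `ℝ` or `ℂ`). -/
def IsNorm (N : (Fin d → K) → ℝ) : Prop :=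
  (∀ x, 0 ≤ N x) ∧ (∀ x, N x = 0 ↔ x = 0) ∧
    (∀ (c : K) (x : Fin d → K), N (c • x) = ‖c‖ * N x) ∧
    (∀ x y, N (x + y) ≤ N x + N y)

/-- Operator norm of a matrix induced by the norm `N` on `Fin d → K`. -/
noncomputable def opNorm (N : (Fin d → K) → ℝ) (A : Matrix (Fin d) (Fin d) K) : ℝ :=
  sSup {r : ℝ | ∃ x : Fin d → K, N x = 1 ∧ r = N (A.mulVec x)}

/-- `‖𝒜‖ = sup_{A ∈ 𝒜} ‖A‖`. -/
noncomputable def setNorm (N : (Fin d → K) → ℝ) (𝒜 : Set (Matrix (Fin d) (Fin d) K)) : ℝ :=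
  sSup (opNorm N '' 𝒜)

/-- `𝒜^n`: the set of all products of `n` matrices from `𝒜`, with `𝒜^0 = {I}`. -/
def prodSet (𝒜 : Set (Matrix (Fin d) (Fin d) K)) : ℕ → Set (Matrix (Fin d) (Fin d) K)
  | 0 => {1}
  | n + 1 => {M | ∃ A ∈ 𝒜, ∃ P ∈ prodSet 𝒜 n, M = A * P}

/-- The joint spectral radius `ρ(𝒜) = limsup_{n → ∞} ‖𝒜^n‖^{1/n}`. -/
noncomputable def jsr (N : (Fin d → K) → ℝ) (𝒜 : Set (Matrix (Fin d) (Fin d) K)) : ℝ :=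
  Filter.limsup (fun n : ℕ => setNorm N (prodSet 𝒜 n) ^ ((n : ℝ)⁻¹)) Filter.atTop

/-- `𝒜` is irreducible: the matrices of `𝒜` have no common invariant subspace
other than `{0}` and `K^d`. -/
def IsIrred (𝒜 : Set (Matrix (Fin d) (Fin d) K)) : Prop :=
  ∀ W : Submodule K (Fin d → K), (∀ A ∈ 𝒜, ∀ x ∈ W, A.mulVec x ∈ W) → W = ⊥ ∨ W = ⊤

/-- `ℬ` is a bounded set of matrices (w.r.t. the operator norm induced by `N`). -/
def IsBdd (N : (Fin d → K) → ℝ) (ℬ : Set (Matrix (Fin d) (Fin d) K)) : Prop :=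
  ∃ C : ℝ, ∀ B ∈ ℬ, opNorm N B ≤ C

/-- The `p`-measure of irreducibility `χ_p(𝒜)`:
`inf_{‖x‖=1} sup { t : ball(0,t) ⊆ conv(𝒜_p(x) ∪ 𝒜_p(-x)) }`, where
`𝒜_p = ⋃_{k ≤ p} 𝒜^k`. -/
noncomputable def chi (N : (Fin d → K) → ℝ) (𝒜 : Set (Matrix (Fin d) (Fin d) K)) (p : ℕ) : ℝ :=
  sInf {s : ℝ | ∃ x : Fin d → K, N x = 1 ∧
    s = sSup {t : ℝ | {y : Fin d → K | N y ≤ t} ⊆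
      convexHull ℝ
        (((fun A : Matrix (Fin d) (Fin d) K => A.mulVec x) ''
            ⋃ k ∈ Finset.range (p + 1), prodSet 𝒜 k) ∪
          ((fun A : Matrix (Fin d) (Fin d) K => A.mulVec (-x)) ''
            ⋃ k ∈ Finset.range (p + 1), prodSet 𝒜 k))}}

/-- `ν_p(𝒜) = max{1, ‖𝒜‖^p} / χ_p(𝒜)`. -/
noncomputable def nu (N : (Fin d → K) → ℝ) (𝒜 : Set (Matrix (Fin d) (Fin d) K)) (p : ℕ) : ℝ :=
  max 1 (setNorm N 𝒜 ^ p) / chi N 𝒜 p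

/-- The Hausdorff distance between two matrix sets, w.r.t. the operator norm induced by `N`. -/
noncomputable def hdist (N : (Fin d → K) → ℝ) (𝒜 ℬ : Set (Matrix (Fin d) (Fin d) K)) : ℝ :=
  max (sSup ((fun A => sInf ((fun B => opNorm N (A - B)) '' ℬ)) '' 𝒜))
      (sSup ((fun B => sInf ((fun A => opNorm N (A - B)) '' 𝒜)) '' ℬ))

/-- `Nb` is a Barabanov norm for `𝒜`: it is a norm on `K^d` and
`ρ(𝒜)·‖x‖_b = max_{A ∈ 𝒜} ‖A x‖_b` for all `x` (`ρ(𝒜)` computed w.r.t. the reference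
norm `N`; its value does not depend on this choice). -/
def IsBarabanov (N Nb : (Fin d → K) → ℝ) (𝒜 : Set (Matrix (Fin d) (Fin d) K)) : Prop :=
  IsNorm Nb ∧ ∀ x : Fin d → K,
    jsr N 𝒜 * Nb x = sSup {r : ℝ | ∃ A ∈ 𝒜, r = Nb (A.mulVec x)}

/-- The eccentricity `ecc(N', N'') = (max_{x ≠ 0} N' x / N'' x) / (min_{x ≠ 0} N' x / N'' x)`. -/
noncomputable def eccen (N' N'' : (Fin d → K) → ℝ) : ℝ :=
  sSup {r : ℝ | ∃ x : Fin d → K, x ≠ 0 ∧ r = N' x / N'' x} /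
    sInf {r : ℝ | ∃ x : Fin d → K, x ≠ 0 ∧ r = N' x / N'' x}

end Defs

/-! In a Barabanov norm `‖·‖_b` of `𝒜`, every `A ∈ 𝒜` has operator norm at most `ρ(𝒜)`.
Changing the vector norm changes operator norms by at most the eccentricity factor `C`, so a
matrix `B` within `‖·‖`-distance `H` of some `A ∈ 𝒜` has `‖B‖_b ≤ ρ(𝒜) + C·H`. Products of `n`
matrices of `ℬ` are then bounded by `(ρ(𝒜) + C·H)ⁿ` in `‖·‖_b`, hence by `C·(ρ(𝒜) + C·H)ⁿ` in
`‖·‖`, and the factor `C` disappears under the `n`-th root. -/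

open scoped Matrix Topology

theorem setOf_exists_mem_eq_image {α β : Type*} (s : Set α) (f : α → β) :
    {b | ∃ a ∈ s, b = f a} = f '' s := by
  ext
  simp only [Set.mem_image, eq_comm, Set.mem_ofPred_eq]

namespace IsNorm

variable {d : ℕ} {K : Type*} [RCLike K] {N N' : (Fin d → K) → ℝ}

def toSeminorm (hN : IsNorm N) : Seminorm K (Fin d → K) := Seminorm.of N hN.2.2.2 hN.2.2.1

theorem nonneg (hN : IsNorm N) (x : Fin d → K) : 0 ≤ N x := hN.1 x

theorem eq_zero_iff (hN : IsNorm N) {x : Fin d → K} : N x = 0 ↔ x = 0 := hN.2.1 x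

theorem map_smul (hN : IsNorm N) (c : K) (x : Fin d → K) : N (c • x) = ‖c‖ * N x :=
  hN.2.2.1 c x

theorem add_le (hN : IsNorm N) (x y : Fin d → K) : N (x + y) ≤ N x + N y := hN.2.2.2 x y

theorem map_zero (hN : IsNorm N) : N 0 = 0 := hN.eq_zero_iff.2 rfl

theorem map_neg (hN : IsNorm N) (x : Fin d → K) : N (-x) = N x := hN.toSeminorm.neg' x

theorem pos (hN : IsNorm N) {x : Fin d → K} (hx : x ≠ 0) : 0 < N x :=
  (hN.nonneg x).lt_of_ne' (hN.eq_zero_iff.not.2 hx)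

theorem continuous (hN : IsNorm N) : Continuous N :=
  continuousOn_univ.1 (hN.toSeminorm.convexOn.continuousOn isOpen_univ)

theorem map_inv_smul_self (hN : IsNorm N) {x : Fin d → K} (hx : x ≠ 0) :
    N (((N x)⁻¹ : K) • x) = 1 := by
  rw [hN.map_smul, norm_inv, RCLike.norm_ofReal, abs_of_pos (hN.pos hx),
    inv_mul_cancel₀ (hN.pos hx).ne']

theorem exists_pos_mul_norm_le (hN : IsNorm N) (hd : 1 ≤ d) :
    ∃ c > 0, ∀ x, c * ‖x‖ ≤ N x := by
  have : Nonempty (Fin d) := ⟨⟨0, hd⟩⟩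
  obtain ⟨z, hz, hmin⟩ := (isCompact_sphere (0 : Fin d → K) 1).exists_isMinOn
    (NormedSpace.sphere_nonempty.2 zero_le_one) hN.continuous.continuousOn
  have hz0 : z ≠ 0 := ne_zero_of_mem_unit_sphere ⟨z, hz⟩
  refine ⟨N z, hN.pos hz0, fun x => ?_⟩
  rcases eq_or_ne x 0 with rfl | hx
  · simp [hN.map_zero]
  have hx' : 0 < ‖x‖ := norm_pos_iff.2 hx
  have hu : ((‖x‖⁻¹ : K) • x) ∈ Metric.sphere (0 : Fin d → K) 1 := by
    rw [mem_sphere_zero_iff_norm, norm_smul, norm_inv, RCLike.norm_ofReal, abs_norm,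
      inv_mul_cancel₀ hx'.ne']
  have hzu := hmin hu
  rw [Set.mem_ofPred_eq, hN.map_smul, norm_inv, RCLike.norm_ofReal, abs_norm] at hzu
  rwa [le_inv_mul_iff₀ hx', mul_comm] at hzu

theorem isCompact_unitSphere (hN : IsNorm N) (hd : 1 ≤ d) :
    IsCompact {x : Fin d → K | N x = 1} := by
  obtain ⟨c, hc, hle⟩ := hN.exists_pos_mul_norm_le hd
  refine Metric.isCompact_of_isClosed_isBounded (isClosed_eq hN.continuous continuous_const)
    ((Metric.isBounded_closedBall (x := 0) (r := c⁻¹)).subset fun x hx => ?_)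
  rw [mem_closedBall_zero_iff, ← one_div, le_div_iff₀' hc]
  exact (hle x).trans_eq hx

theorem unitSphere_nonempty (hN : IsNorm N) (hd : 1 ≤ d) :
    {x : Fin d → K | N x = 1}.Nonempty := by
  have : Nonempty (Fin d) := ⟨⟨0, hd⟩⟩
  obtain ⟨x, hx⟩ := exists_ne (0 : Fin d → K)
  exact ⟨_, hN.map_inv_smul_self hx⟩

section opNorm

variable (hN : IsNorm N) (hd : 1 ≤ d)
include hN hd

theorem le_opNorm (A : Matrix (Fin d) (Fin d) K) {x : Fin d → K} (hx : N x = 1) :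
    N (A *ᵥ x) ≤ opNorm N A := by
  have hbdd : BddAbove ((fun y => N (A *ᵥ y)) '' {y | N y = 1}) :=
    ((hN.isCompact_unitSphere hd).image
      (hN.continuous.comp (continuous_const.matrix_mulVec continuous_id))).bddAbove
  rw [← setOf_exists_mem_eq_image] at hbdd
  exact le_csSup hbdd ⟨x, hx, rfl⟩

theorem opNorm_le {A : Matrix (Fin d) (Fin d) K} {c : ℝ}
    (h : ∀ x, N x = 1 → N (A *ᵥ x) ≤ c) : opNorm N A ≤ c := by
  obtain ⟨x, hx⟩ := hN.unitSphere_nonempty hd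
  exact csSup_le ⟨_, x, hx, rfl⟩ fun r ⟨x, hx, hr⟩ => hr ▸ h x hx

theorem opNorm_nonneg (A : Matrix (Fin d) (Fin d) K) : 0 ≤ opNorm N A := by
  obtain ⟨x, hx⟩ := hN.unitSphere_nonempty hd
  exact (hN.nonneg _).trans (hN.le_opNorm hd A hx)

theorem le_opNorm_mul (A : Matrix (Fin d) (Fin d) K) (x : Fin d → K) :
    N (A *ᵥ x) ≤ opNorm N A * N x := by
  rcases eq_or_ne x 0 with rfl | hx
  · simp [hN.map_zero]
  have h := hN.le_opNorm hd A (hN.map_inv_smul_self hx)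
  rwa [Matrix.mulVec_smul, hN.map_smul, norm_inv, RCLike.norm_ofReal, abs_of_pos (hN.pos hx),
    inv_mul_le_iff₀ (hN.pos hx), mul_comm] at h

theorem opNorm_mul_le (A B : Matrix (Fin d) (Fin d) K) :
    opNorm N (A * B) ≤ opNorm N A * opNorm N B := by
  refine hN.opNorm_le hd fun x hx => ?_
  calc N ((A * B) *ᵥ x) = N (A *ᵥ (B *ᵥ x)) := by rw [Matrix.mulVec_mulVec]
    _ ≤ opNorm N A * N (B *ᵥ x) := hN.le_opNorm_mul hd A _
    _ ≤ opNorm N A * opNorm N B := by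
      gcongr
      · exact hN.opNorm_nonneg hd A
      · exact hN.le_opNorm hd B hx

theorem opNorm_one_le : opNorm N (1 : Matrix (Fin d) (Fin d) K) ≤ 1 :=
  hN.opNorm_le hd fun x hx => by rw [Matrix.one_mulVec, hx]

theorem opNorm_add_le (A B : Matrix (Fin d) (Fin d) K) :
    opNorm N (A + B) ≤ opNorm N A + opNorm N B :=
  hN.opNorm_le hd fun x hx => by
    rw [Matrix.add_mulVec]
    exact (hN.add_le _ _).trans (add_le_add (hN.le_opNorm hd A hx) (hN.le_opNorm hd B hx))

omit hd in
theorem opNorm_neg (A : Matrix (Fin d) (Fin d) K) : opNorm N (-A) = opNorm N A := by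
  simp only [opNorm, Matrix.neg_mulVec, hN.map_neg]

theorem opNorm_sub_le (A B : Matrix (Fin d) (Fin d) K) :
    opNorm N (A - B) ≤ opNorm N A + opNorm N B := by
  simpa only [sub_eq_add_neg, hN.opNorm_neg] using hN.opNorm_add_le hd A (-B)

end opNorm

end IsNorm

section Eccentricity

variable {d : ℕ} {K : Type*} [RCLike K] {N N' : (Fin d → K) → ℝ}

def normRatios (N' N : (Fin d → K) → ℝ) : Set ℝ := {r | ∃ x : Fin d → K, x ≠ 0 ∧ r = N' x / N x}

theorem eccen_eq_sSup_div_sInf : eccen N' N = sSup (normRatios N' N) / sInf (normRatios N' N) := rfl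

variable (hN : IsNorm N) (hN' : IsNorm N')
include hN hN'

theorem normRatios_eq_image : normRatios N' N = N' '' {x | N x = 1} := by
  ext r
  constructor
  · rintro ⟨x, hx, rfl⟩
    refine ⟨_, hN.map_inv_smul_self hx, ?_⟩
    rw [hN'.map_smul, norm_inv, RCLike.norm_ofReal, abs_of_pos (hN.pos hx), inv_mul_eq_div]
  · rintro ⟨x, hx, rfl⟩
    refine ⟨x, fun h => ?_, by rw [show N x = 1 from hx, div_one]⟩
    simp [h, hN.map_zero] at hx

theorem normRatios_nonneg : ∀ r ∈ normRatios N' N, 0 ≤ r :=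
  fun _ ⟨x, _, hr⟩ => hr ▸ div_nonneg (hN'.nonneg x) (hN.nonneg x)

theorem sInf_normRatios_mul_le (y : Fin d → K) : sInf (normRatios N' N) * N y ≤ N' y := by
  rcases eq_or_ne y 0 with rfl | hy
  · simp [hN.map_zero, hN'.map_zero]
  rw [← le_div_iff₀ (hN.pos hy)]
  exact csInf_le ⟨0, normRatios_nonneg hN hN'⟩ ⟨y, hy, rfl⟩

variable (hd : 1 ≤ d)
include hd

theorem isCompact_normRatios : IsCompact (normRatios N' N) :=
  normRatios_eq_image hN hN' ▸ (hN.isCompact_unitSphere hd).image hN'.continuous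

theorem normRatios_nonempty : (normRatios N' N).Nonempty :=
  normRatios_eq_image hN hN' ▸ (hN.unitSphere_nonempty hd).image N'

theorem sInf_normRatios_pos : 0 < sInf (normRatios N' N) := by
  obtain ⟨x, hx, hr⟩ := (isCompact_normRatios hN hN' hd).sInf_mem (normRatios_nonempty hN hN' hd)
  rw [hr]
  exact div_pos (hN'.pos hx) (hN.pos hx)

theorem le_sSup_normRatios_mul (y : Fin d → K) : N' y ≤ sSup (normRatios N' N) * N y := by
  rcases eq_or_ne y 0 with rfl | hy
  · simp [hN.map_zero, hN'.map_zero]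
  rw [← div_le_iff₀ (hN.pos hy)]
  exact le_csSup (isCompact_normRatios hN hN' hd).bddAbove ⟨y, hy, rfl⟩

theorem eccen_pos : 0 < eccen N' N := by
  have hm := sInf_normRatios_pos hN hN' hd
  exact div_pos (hm.trans_le (csInf_le_csSup (normRatios_nonempty hN hN' hd)
    (isCompact_normRatios hN hN' hd).bddBelow (isCompact_normRatios hN hN' hd).bddAbove)) hm

theorem IsNorm.opNorm_le_mul_mul_opNorm {a b : ℝ} (ha : 0 ≤ a)
    (hNN' : ∀ y, N y ≤ a * N' y) (hN'N : ∀ y, N' y ≤ b * N y) (P : Matrix (Fin d) (Fin d) K) :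
    opNorm N P ≤ a * b * opNorm N' P :=
  hN.opNorm_le hd fun x hx => calc
    N (P *ᵥ x) ≤ a * N' (P *ᵥ x) := hNN' _
    _ ≤ a * (opNorm N' P * N' x) := by gcongr; exact hN'.le_opNorm_mul hd P x
    _ ≤ a * (opNorm N' P * (b * N x)) := by
      gcongr
      · exact hN'.opNorm_nonneg hd P
      · exact hN'N x
    _ = a * b * opNorm N' P := by rw [hx]; ring

theorem IsNorm.opNorm_le_eccen_mul_opNorm (P : Matrix (Fin d) (Fin d) K) :
    opNorm N P ≤ eccen N' N * opNorm N' P := by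
  have hm := sInf_normRatios_pos hN hN' hd
  rw [eccen_eq_sSup_div_sInf, div_eq_inv_mul]
  refine hN.opNorm_le_mul_mul_opNorm hN' hd (inv_nonneg.2 hm.le) (fun y => ?_)
    (le_sSup_normRatios_mul hN hN' hd) P
  rw [inv_mul_eq_div, le_div_iff₀ hm, mul_comm]
  exact sInf_normRatios_mul_le hN hN' y

theorem IsNorm.opNorm_le_eccen_mul_opNorm' (P : Matrix (Fin d) (Fin d) K) :
    opNorm N' P ≤ eccen N' N * opNorm N P := by
  have hm := sInf_normRatios_pos hN hN' hd
  rw [eccen_eq_sSup_div_sInf, div_eq_mul_inv]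
  refine hN'.opNorm_le_mul_mul_opNorm hN hd (Real.sSup_nonneg (normRatios_nonneg hN hN'))
    (le_sSup_normRatios_mul hN hN' hd) (fun y => ?_) P
  rw [inv_mul_eq_div, le_div_iff₀ hm, mul_comm]
  exact sInf_normRatios_mul_le hN hN' y

end Eccentricity

section Barabanov

variable {d : ℕ} {K : Type*} [RCLike K] {N Nb : (Fin d → K) → ℝ}
  {𝒜 : Set (Matrix (Fin d) (Fin d) K)}

theorem IsBarabanov.jsr_nonneg (hNb : IsBarabanov N Nb 𝒜) (hd : 1 ≤ d) : 0 ≤ jsr N 𝒜 := by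
  obtain ⟨x, hx⟩ := hNb.1.unitSphere_nonempty hd
  have h := hNb.2 x
  rw [show Nb x = 1 from hx, mul_one] at h
  exact h ▸ Real.sSup_nonneg fun r ⟨A, _, hr⟩ => hr ▸ hNb.1.nonneg _

theorem IsBarabanov.opNorm_le_jsr (hNb : IsBarabanov N Nb 𝒜) (hd : 1 ≤ d) (h𝒜 : IsCompact 𝒜)
    {A : Matrix (Fin d) (Fin d) K} (hA : A ∈ 𝒜) : opNorm Nb A ≤ jsr N 𝒜 := by
  refine hNb.1.opNorm_le hd fun x hx => ?_
  have hbdd : BddAbove ((fun A => Nb (A *ᵥ x)) '' 𝒜) :=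
    (h𝒜.image (hNb.1.continuous.comp (continuous_id.matrix_mulVec continuous_const))).bddAbove
  rw [← setOf_exists_mem_eq_image] at hbdd
  calc Nb (A *ᵥ x) ≤ jsr N 𝒜 * Nb x := (hNb.2 x).symm ▸ le_csSup hbdd ⟨A, hA, rfl⟩
    _ = jsr N 𝒜 := by rw [hx, mul_one]

end Barabanov

section Hausdorff

variable {d : ℕ} {K : Type*} [RCLike K] {N : (Fin d → K) → ℝ}
  {𝒜 ℬ : Set (Matrix (Fin d) (Fin d) K)}

theorem hdist_nonneg (hN : IsNorm N) (hd : 1 ≤ d) : 0 ≤ hdist N 𝒜 ℬ :=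
  le_max_of_le_left <| Real.sSup_nonneg fun _ ⟨_, _, hr⟩ =>
    hr ▸ Real.sInf_nonneg fun _ ⟨_, _, hs⟩ => hs ▸ hN.opNorm_nonneg hd _

theorem exists_opNorm_sub_lt_hdist_add (hN : IsNorm N) (hd : 1 ≤ d) (h𝒜 : 𝒜.Nonempty)
    (hℬ : IsBdd N ℬ) {B : Matrix (Fin d) (Fin d) K} (hB : B ∈ ℬ) {ε : ℝ} (hε : 0 < ε) :
    ∃ A ∈ 𝒜, opNorm N (A - B) < hdist N 𝒜 ℬ + ε := by
  obtain ⟨A₀, hA₀⟩ := h𝒜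
  obtain ⟨c, hc⟩ := hℬ
  have hbelow (B' : Matrix (Fin d) (Fin d) K) :
      BddBelow ((fun A => opNorm N (A - B')) '' 𝒜) :=
    ⟨0, by rintro _ ⟨A, _, rfl⟩; exact hN.opNorm_nonneg hd _⟩
  have hbdd : BddAbove ((fun B => sInf ((fun A => opNorm N (A - B)) '' 𝒜)) '' ℬ) := by
    refine ⟨opNorm N A₀ + c, ?_⟩
    rintro _ ⟨B', hB', rfl⟩
    exact (csInf_le (hbelow B') ⟨A₀, hA₀, rfl⟩).trans
      ((hN.opNorm_sub_le hd A₀ B').trans (add_le_add le_rfl (hc B' hB')))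
  have hlt : sInf ((fun A => opNorm N (A - B)) '' 𝒜) < hdist N 𝒜 ℬ + ε :=
    ((le_csSup hbdd ⟨B, hB, rfl⟩).trans (le_max_right _ _)).trans_lt (lt_add_of_pos_right _ hε)
  obtain ⟨_, ⟨A, hA, rfl⟩, hAB⟩ := exists_lt_of_csInf_lt (Set.image_nonempty.2 ⟨A₀, hA₀⟩) hlt
  exact ⟨A, hA, hAB⟩

end Hausdorff

section JointSpectralRadius

variable {d : ℕ} {K : Type*} [RCLike K] {N : (Fin d → K) → ℝ}
  {ℬ : Set (Matrix (Fin d) (Fin d) K)}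

theorem IsNorm.opNorm_le_pow_of_mem_prodSet (hN : IsNorm N) (hd : 1 ≤ d) {r : ℝ} (hr : 0 ≤ r)
    (hℬ : ∀ B ∈ ℬ, opNorm N B ≤ r) :
    ∀ {n : ℕ} {P : Matrix (Fin d) (Fin d) K}, P ∈ prodSet ℬ n → opNorm N P ≤ r ^ n
  | 0, _, rfl => (hN.opNorm_one_le hd).trans_eq (pow_zero r).symm
  | n + 1, _, ⟨B, hB, P, hP, rfl⟩ => calc
      opNorm N (B * P) ≤ opNorm N B * opNorm N P := hN.opNorm_mul_le hd B P
      _ ≤ r * r ^ n := mul_le_mul (hℬ B hB) (hN.opNorm_le_pow_of_mem_prodSet hd hr hℬ hP)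
        (hN.opNorm_nonneg hd P) hr
      _ = r ^ (n + 1) := (pow_succ' r n).symm

theorem limsup_rpow_inv_le {f : ℕ → ℝ} {c r : ℝ} (hf : ∀ n, 0 ≤ f n) (hc : 0 < c) (hr : 0 ≤ r)
    (hfcr : ∀ n, f n ≤ c * r ^ n) :
    limsup (fun n : ℕ => f n ^ (n : ℝ)⁻¹) atTop ≤ r := by
  have hroot : ∀ᶠ n : ℕ in atTop, f n ^ (n : ℝ)⁻¹ ≤ c ^ (n : ℝ)⁻¹ * r := by
    filter_upwards [eventually_ne_atTop 0] with n hn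
    calc f n ^ (n : ℝ)⁻¹ ≤ (c * r ^ n) ^ (n : ℝ)⁻¹ := by gcongr; exacts [hf n, hfcr n]
      _ = c ^ (n : ℝ)⁻¹ * r := by
        rw [Real.mul_rpow hc.le (by positivity), Real.pow_rpow_inv_natCast hr hn]
  have hlim : Tendsto (fun n : ℕ => c ^ (n : ℝ)⁻¹ * r) atTop (𝓝 r) := by
    simpa using ((tendsto_const_nhds (x := c)).rpow
      (tendsto_inv_atTop_zero.comp tendsto_natCast_atTop_atTop) (Or.inl hc.ne')).mul_const r
  refine (limsup_le_limsup hroot ?_ hlim.isBoundedUnder_le).trans_eq hlim.limsup_eq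
  exact isBoundedUnder_of ⟨0, fun n => Real.rpow_nonneg (hf n) _⟩ |>.isCoboundedUnder_le

theorem IsNorm.jsr_le_of_opNorm_le (hN : IsNorm N) (hd : 1 ≤ d) {c r : ℝ} (hc : 0 < c)
    (hr : 0 ≤ r) (hℬ : ∀ n, ∀ P ∈ prodSet ℬ n, opNorm N P ≤ c * r ^ n) : jsr N ℬ ≤ r :=
  limsup_rpow_inv_le (fun _ => Real.sSup_nonneg fun _ ⟨_, _, h⟩ => h ▸ hN.opNorm_nonneg hd _) hc hr
    fun n => Real.sSup_le (fun _ ⟨P, hP, h⟩ => h ▸ hℬ n P hP) (by positivity)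

end JointSpectralRadius

theorem IsBarabanov.opNorm_le_jsr_add_eccen_mul_hdist {d : ℕ} {K : Type*} [RCLike K]
    {N Nb : (Fin d → K) → ℝ} {𝒜 ℬ : Set (Matrix (Fin d) (Fin d) K)}
    (hNb : IsBarabanov N Nb 𝒜) (hd : 1 ≤ d) (hN : IsNorm N) (h𝒜ne : 𝒜.Nonempty)
    (h𝒜cp : IsCompact 𝒜) (hℬbd : IsBdd N ℬ) {B : Matrix (Fin d) (Fin d) K} (hB : B ∈ ℬ) :
    opNorm Nb B ≤ jsr N 𝒜 + eccen Nb N * hdist N 𝒜 ℬ := by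
  have hC := eccen_pos hN hNb.1 hd
  refine le_of_forall_pos_lt_add fun ε hε => ?_
  obtain ⟨A, hA, hAB⟩ := exists_opNorm_sub_lt_hdist_add hN hd h𝒜ne hℬbd hB (div_pos hε hC)
  calc opNorm Nb B = opNorm Nb (A - (A - B)) := by rw [sub_sub_cancel]
    _ ≤ opNorm Nb A + opNorm Nb (A - B) := hNb.1.opNorm_sub_le hd _ _
    _ ≤ jsr N 𝒜 + eccen Nb N * opNorm N (A - B) :=
      add_le_add (hNb.opNorm_le_jsr hd h𝒜cp hA) (hN.opNorm_le_eccen_mul_opNorm' hNb.1 hd _)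
    _ < jsr N 𝒜 + eccen Nb N * (hdist N 𝒜 ℬ + ε / eccen Nb N) := by gcongr
    _ = jsr N 𝒜 + eccen Nb N * hdist N 𝒜 ℬ + ε := by field_simp; ring

theorem jsr_upper_ecc_general {d : ℕ} (hd : 1 ≤ d) {K : Type*} [RCLike K]
    (N : (Fin d → K) → ℝ) (hN : IsNorm N)
    (𝒜 : Set (Matrix (Fin d) (Fin d) K))
    (h𝒜ne : 𝒜.Nonempty) (h𝒜cp : IsCompact 𝒜)
    (Nb : (Fin d → K) → ℝ) (hNb : IsBarabanov N Nb 𝒜)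
    (ℬ : Set (Matrix (Fin d) (Fin d) K)) (hℬbd : IsBdd N ℬ) :
    jsr N ℬ ≤ jsr N 𝒜 + eccen Nb N * hdist N 𝒜 ℬ := by
  set ρ := jsr N 𝒜 + eccen Nb N * hdist N 𝒜 ℬ
  have hC : 0 < eccen Nb N := eccen_pos hN hNb.1 hd
  have hρ : 0 ≤ ρ := add_nonneg (hNb.jsr_nonneg hd) (mul_nonneg hC.le (hdist_nonneg hN hd))
  refine hN.jsr_le_of_opNorm_le hd hC hρ fun n P hP => ?_
  calc opNorm N P ≤ eccen Nb N * opNorm Nb P := hN.opNorm_le_eccen_mul_opNorm hNb.1 hd P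
    _ ≤ eccen Nb N * ρ ^ n := by
      gcongr
      exact hNb.1.opNorm_le_pow_of_mem_prodSet hd hρ
        (fun B hB => hNb.opNorm_le_jsr_add_eccen_mul_hdist hd hN h𝒜ne h𝒜cp hℬbd hB) hP

/-- upper estimate `ρ(ℬ) ≤ ρ(𝒜) + C · H(𝒜, ℬ)` with
`C = ecc(‖·‖_𝒜, ‖·‖)`. -/
theorem jsr_upper_ecc {d : ℕ} (hd : 1 ≤ d) {K : Type*} [RCLike K]
    (N : (Fin d → K) → ℝ) (hN : IsNorm N)
    (𝒜 : Set (Matrix (Fin d) (Fin d) K))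
    (h𝒜ne : 𝒜.Nonempty) (h𝒜cp : IsCompact 𝒜) (h𝒜ir : IsIrred 𝒜)
    (Nb : (Fin d → K) → ℝ) (hNb : IsBarabanov N Nb 𝒜)
    (ℬ : Set (Matrix (Fin d) (Fin d) K)) (hℬne : ℬ.Nonempty) (hℬbd : IsBdd N ℬ) :
    jsr N ℬ ≤ jsr N 𝒜 + eccen Nb N * hdist N 𝒜 ℬ :=
  jsr_upper_ecc_general hd N hN 𝒜 h𝒜ne h𝒜cp Nb hNb ℬ hℬbd

end JSRPaper
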